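/- arXiv:2212.00070 — 3 statements merged into one kernel-verified Lean document; each statement's English description precedes it below -/
import Mathlib

section
/- For any odd positive integer n and complex z (away from poles), cot(nz) = (-1)^((n-1)/2) · ∏_{m=0}^{n-1} cot(z + mπ/n). -/
open Complex Polynomial Finset

lemma prod_aux (n : ℕ) (hn : Odd n) (hpos : 0 < n) (w α : ℂ) :
    ∏ m ∈ Finset.range n, (w * Complex.exp (2 * Real.pi * I / n) ^ m - α) = w ^ n - α ^ n := by
  set ω : ℂ := Complex.exp (2 * Real.pi * I / n) with hω
  have hprim : IsPrimitiveRoot ω n := Complex.isPrimitiveRoot_exp n hpos.ne'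
  have hωn : ω ^ n = 1 := hprim.pow_eq_one
  have hω0 : ω ≠ 0 := by
    intro h; rw [h] at hωn; simp [zero_pow hpos.ne'] at hωn
  have hpoly := X_pow_sub_C_eq_prod hprim.inv hpos (rfl : α ^ n = α ^ n)
  have heval := congrArg (Polynomial.eval w) hpoly
  simp only [eval_sub, eval_pow, eval_X, eval_C, eval_prod] at heval
  obtain ⟨k, hk⟩ := hn
  have hsum : ∑ i ∈ Finset.range n, i = n * k := by
    have h2 : (∑ i ∈ Finset.range n, i) * 2 = n * k * 2 := by
      rw [Finset.sum_range_id_mul_two, hk, Nat.add_sub_cancel]; ring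
    omega
  calc ∏ m ∈ Finset.range n, (w * ω ^ m - α)
      = ∏ m ∈ Finset.range n, (ω ^ m * (w - ω⁻¹ ^ m * α)) := by
        apply Finset.prod_congr rfl
        intro m _
        field_simp
        rw [one_div, inv_pow, mul_sub, mul_left_comm, mul_inv_cancel₀ (pow_ne_zero _ hω0)]; ring
    _ = (∏ m ∈ Finset.range n, ω ^ m) * ∏ m ∈ Finset.range n, (w - ω⁻¹ ^ m * α) := by
        rw [Finset.prod_mul_distrib]
    _ = w ^ n - α ^ n := by
        rw [Finset.prod_pow_eq_pow_sum, hsum, pow_mul, hωn, one_pow, one_mul, heval]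

lemma key_prod (n k : ℕ) (hk : n = 2 * k + 1) (z α : ℂ) :
    ∏ m ∈ Finset.range n,
      (Complex.exp ((z + m * Real.pi / n) * I) - α * Complex.exp (-((z + m * Real.pi / n) * I)))
    = (-1) ^ k * (Complex.exp ((n * z) * I) - α ^ n * Complex.exp (-((n * z) * I))) := by
  have hpos : 0 < n := by omega
  have hn : Odd n := ⟨k, by omega⟩
  have hn0 : (n : ℂ) ≠ 0 := Nat.cast_ne_zero.2 hpos.ne'
  set u : ℂ := Complex.exp (z * I) with hu
  set v : ℂ := Complex.exp (Real.pi * I / n) with hv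
  have hu0 : u ≠ 0 := Complex.exp_ne_zero _
  have hv0 : v ≠ 0 := Complex.exp_ne_zero _
  have hv2 : v ^ 2 = Complex.exp (2 * Real.pi * I / n) := by
    rw [hv, ← Complex.exp_nat_mul]; congr 1; push_cast; ring
  have hvn : v ^ n = -1 := by
    rw [hv, ← Complex.exp_nat_mul]
    have : (n : ℂ) * (Real.pi * I / n) = Real.pi * I := by field_simp
    rw [this, Complex.exp_pi_mul_I]
  have hun : u ^ n = Complex.exp ((n * z) * I) := by
    rw [hu, ← Complex.exp_nat_mul]; congr 1; ring
  have hexp1 : ∀ m : ℕ, Complex.exp ((z + m * Real.pi / n) * I) = u * v ^ m := by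
    intro m
    rw [hu, hv, ← Complex.exp_nat_mul, ← Complex.exp_add]; congr 1; ring
  have hfac : ∀ m : ℕ,
      Complex.exp ((z + m * Real.pi / n) * I) - α * Complex.exp (-((z + m * Real.pi / n) * I))
      = u⁻¹ * (v⁻¹) ^ m * (u ^ 2 * (v ^ 2) ^ m - α) := by
    intro m
    rw [Complex.exp_neg, hexp1 m]
    field_simp
    have h : v ^ m * v⁻¹ ^ m = 1 := by rw [inv_pow, mul_inv_cancel₀ (pow_ne_zero _ hv0)]
    linear_combination (α - u ^ 2 * v ^ (m * 2)) * h
  calc ∏ m ∈ Finset.range n,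
      (Complex.exp ((z + m * Real.pi / n) * I) - α * Complex.exp (-((z + m * Real.pi / n) * I)))
      = ∏ m ∈ Finset.range n, (u⁻¹ * (v⁻¹) ^ m * (u ^ 2 * (v ^ 2) ^ m - α)) :=
        Finset.prod_congr rfl fun m _ => hfac m
    _ = (u⁻¹) ^ n * ((v⁻¹) ^ (n * k)) * ((u ^ 2) ^ n - α ^ n) := by
        rw [Finset.prod_mul_distrib, Finset.prod_mul_distrib, Finset.prod_const,
          Finset.card_range, Finset.prod_pow_eq_pow_sum]
        have hsum : ∑ i ∈ Finset.range n, i = n * k := by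
          have h2 : (∑ i ∈ Finset.range n, i) * 2 = n * k * 2 := by
            rw [Finset.sum_range_id_mul_two, hk, Nat.add_sub_cancel]; ring
          omega
        rw [hsum, hv2, prod_aux n hn hpos _ α]
    _ = (-1) ^ k * (Complex.exp ((n * z) * I) - α ^ n * Complex.exp (-((n * z) * I))) := by
        have hvnk : (v⁻¹) ^ (n * k) = (-1) ^ k := by
          rw [inv_pow, pow_mul, hvn, ← inv_pow]
          norm_num
        rw [hvnk, inv_pow, hun, ← pow_mul u 2 n, mul_comm 2 n, pow_mul, hun,
          Complex.exp_neg]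
        have hU : Complex.exp ((n * z) * I) ≠ 0 := Complex.exp_ne_zero _
        field_simp

lemma two_I_sin (w : ℂ) :
    Complex.exp (w * I) - Complex.exp (-(w * I)) = 2 * I * Complex.sin w := by
  rw [Complex.sin, neg_mul]
  linear_combination (Complex.exp (w * I) - Complex.exp (-(w * I))) * Complex.I_sq

lemma two_cos' (w : ℂ) :
    Complex.exp (w * I) + Complex.exp (-(w * I)) = 2 * Complex.cos w := by
  rw [Complex.cos, neg_mul]
  ring

theorem cot_mul_eq_prod (n : ℕ) (hn : Odd n) (hpos : 0 < n) (z : ℂ)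
    (hsin : Complex.sin (n * z) ≠ 0)
    (hm : ∀ m : ℕ, m < n → Complex.sin (z + m * Real.pi / n) ≠ 0) :
    Complex.cot (n * z) =
      (-1 : ℂ) ^ ((n - 1) / 2) * ∏ m ∈ Finset.range n, Complex.cot (z + m * Real.pi / n) := by
  obtain ⟨k, hk⟩ := hn
  have hk' : n = 2 * k + 1 := by omega
  have hkk : (n - 1) / 2 = k := by omega
  set ε : ℂ := (-1 : ℂ) ^ k with hε_def
  have hε : ε * ε = 1 := by
    rw [hε_def, ← pow_add, ← two_mul, pow_mul]; norm_num
  -- sine product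
  have hS : ((2 : ℂ) * I) ^ n * ∏ m ∈ Finset.range n, Complex.sin (z + m * Real.pi / n)
      = ε * (2 * I * Complex.sin (n * z)) := by
    rw [← Finset.card_range n, ← Finset.prod_const, Finset.card_range, ← Finset.prod_mul_distrib]
    have h1 : ∀ m ∈ Finset.range n,
        2 * I * Complex.sin (z + m * Real.pi / n)
        = Complex.exp ((z + m * Real.pi / n) * I)
          - (1 : ℂ) * Complex.exp (-((z + m * Real.pi / n) * I)) := by
      intro m _; rw [one_mul, two_I_sin]
    rw [Finset.prod_congr rfl h1, key_prod n k hk' z 1, one_pow, one_mul, two_I_sin]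
  -- cosine product
  have hC : ((2 : ℂ)) ^ n * ∏ m ∈ Finset.range n, Complex.cos (z + m * Real.pi / n)
      = ε * (2 * Complex.cos (n * z)) := by
    rw [← Finset.card_range n, ← Finset.prod_const, Finset.card_range, ← Finset.prod_mul_distrib]
    have h1 : ∀ m ∈ Finset.range n,
        2 * Complex.cos (z + m * Real.pi / n)
        = Complex.exp ((z + m * Real.pi / n) * I)
          - (-1 : ℂ) * Complex.exp (-((z + m * Real.pi / n) * I)) := by
      intro m _; rw [← two_cos']; ring
    have hodd : ((-1 : ℂ)) ^ n = -1 := Odd.neg_one_pow ⟨k, by omega⟩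
    rw [Finset.prod_congr rfl h1, key_prod n k hk' z (-1), hodd, hε_def]
    linear_combination ((-1 : ℂ) ^ k) * two_cos' ((n : ℂ) * z)
  have hIn : I ^ n = ε * I := by
    rw [hk', pow_succ, pow_mul, Complex.I_sq, hε_def]
  have h2In : ((2 : ℂ) * I) ^ n = 2 ^ n * (ε * I) := by
    rw [mul_pow, hIn]
  rw [h2In] at hS
  have hprodsin : (∏ m ∈ Finset.range n, Complex.sin (z + m * Real.pi / n)) ≠ 0 :=
    Finset.prod_ne_zero_iff.2 fun m hmem => hm m (Finset.mem_range.1 hmem)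
  have hε0 : ε ≠ 0 := by
    rw [hε_def]; exact pow_ne_zero _ (by norm_num)
  have hf : ((2 : ℂ) ^ n * (2 * I)) * ε ≠ 0 := by
    apply mul_ne_zero (mul_ne_zero (pow_ne_zero _ two_ne_zero)
      (mul_ne_zero two_ne_zero Complex.I_ne_zero)) hε0
  have hmain : Complex.cos (n * z) * ∏ m ∈ Finset.range n, Complex.sin (z + m * Real.pi / n)
      = ε * (∏ m ∈ Finset.range n, Complex.cos (z + m * Real.pi / n)) * Complex.sin (n * z) := by
    apply mul_left_cancel₀ hf
    linear_combination (2 * Complex.cos (n * z)) * hS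
      - (2 * I * ε * ε * Complex.sin (n * z)) * hC
      - (4 * I * Complex.sin (n * z) * Complex.cos (n * z) * ε) * hε
  rw [hkk, ← hε_def]
  simp only [Complex.cot_eq_cos_div_sin, Finset.prod_div_distrib]
  rw [mul_div_assoc', div_eq_div_iff hsin hprodsin]
  linear_combination hmain
end

section
/- For any odd positive integer n and complex z, cos(nz) = (-1)^((n-1)/2) · 2^(n-1) · ∏_{m=0}^{n-1} cos(z + mπ/n). -/
open Complex Finset Polynomial

lemma prod_sub_pow_primroot (n : ℕ) (hpos : 0 < n) {ζ : ℂ} (h : IsPrimitiveRoot ζ n) (x : ℂ) :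
    ∏ m ∈ Finset.range n, (x - ζ ^ m) = x ^ n - 1 := by
  classical
  have hpoly := Polynomial.X_pow_sub_one_eq_prod hpos h
  have himg : (Finset.range n).image (fun m => ζ ^ m) = Polynomial.nthRootsFinset n (1 : ℂ) := by
    apply Finset.eq_of_subset_of_card_le
    · intro y hy
      simp only [Finset.mem_image, Finset.mem_range] at hy
      obtain ⟨m, _, rfl⟩ := hy
      exact (Polynomial.mem_nthRootsFinset hpos (1 : ℂ)).2
        (by rw [← pow_mul, mul_comm, pow_mul, h.pow_eq_one, one_pow])
    · rw [h.card_nthRootsFinset, Finset.card_image_of_injOn, Finset.card_range]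
      intro i hi j hj hij
      exact h.pow_inj (Finset.mem_range.1 hi) (Finset.mem_range.1 hj) hij
  have := congrArg (Polynomial.eval x) hpoly
  simp only [Polynomial.eval_sub, Polynomial.eval_pow, Polynomial.eval_X, Polynomial.eval_one,
    Polynomial.eval_prod, Polynomial.eval_C] at this
  rw [this, ← himg, Finset.prod_image]
  intro i hi j hj hij
  exact h.pow_inj (Finset.mem_range.1 hi) (Finset.mem_range.1 hj) hij

theorem cos_mul_eq_prod (n : ℕ) (hn : Odd n) (hpos : 0 < n) (z : ℂ) :
    Complex.cos (n * z) =
      (-1 : ℂ) ^ ((n - 1) / 2) * 2 ^ (n - 1) *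
        ∏ m ∈ Finset.range n, Complex.cos (z + m * Real.pi / n) := by
  classical
  obtain ⟨k, hk⟩ := hn
  have hk2 : (n - 1) / 2 = k := by omega
  have hn0 : (n : ℂ) ≠ 0 := Nat.cast_ne_zero.2 hpos.ne'
  set a : ℂ := Complex.exp (z * I) with ha
  set b : ℂ := Complex.exp (-z * I) with hb
  set w : ℂ := Complex.exp (Real.pi * I / n) with hw
  set ζ : ℂ := Complex.exp (2 * Real.pi * I / n) with hζ
  have hprim : IsPrimitiveRoot ζ n := Complex.isPrimitiveRoot_exp n hpos.ne'
  have hwsq : w * w = ζ := by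
    rw [hw, hζ, ← Complex.exp_add]; ring_nf
  have hwn : w ^ n = -1 := by
    rw [hw, ← Complex.exp_nat_mul]
    rw [mul_div_assoc', mul_comm, mul_div_assoc, div_self hn0, mul_one]
    exact Complex.exp_pi_mul_I
  have hwne : w ≠ 0 := Complex.exp_ne_zero _
  have hane : a ≠ 0 := Complex.exp_ne_zero _
  have hwm : ∀ m : ℕ, w ^ m = Complex.exp (m * Real.pi * I / n) := by
    intro m
    rw [hw, ← Complex.exp_nat_mul]
    ring_nf
  have hwim : ∀ m : ℕ, (w⁻¹) ^ m = Complex.exp (-(m * Real.pi * I / n)) := by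
    intro m
    rw [inv_pow, hwm, ← Complex.exp_neg]
  -- rewrite each cosine
  have hcos : ∀ m : ℕ, Complex.cos (z + m * Real.pi / n) = (a * w ^ m + b * (w⁻¹) ^ m) / 2 := by
    intro m
    rw [Complex.cos, hwm, hwim, ha, hb, ← Complex.exp_add, ← Complex.exp_add]
    congr 2 <;> ring
  have key : ∀ m : ℕ, a * w ^ m + b * (w⁻¹) ^ m = (w⁻¹) ^ m * (a * ζ ^ m + b) := by
    intro m
    have : (ζ : ℂ) ^ m = w ^ m * w ^ m := by rw [← hwsq, mul_pow]
    field_simp [this]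
    have hX : (w ^ m)⁻¹ * w ^ m = 1 := inv_mul_cancel₀ (pow_ne_zero _ hwne)
    rw [this, one_div, inv_pow]
    linear_combination (-(a * w ^ m)) * hX
  have hprod1 : ∏ m ∈ Finset.range n, (a * ζ ^ m + b) = a ^ n + b ^ n := by
    have hfact : ∀ m : ℕ, a * ζ ^ m + b = (-a) * ((-b / a) - ζ ^ m) := by
      intro m; field_simp; ring
    calc ∏ m ∈ Finset.range n, (a * ζ ^ m + b)
        = ∏ m ∈ Finset.range n, ((-a) * ((-b / a) - ζ ^ m)) := by
          exact Finset.prod_congr rfl fun m _ => hfact m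
      _ = (-a) ^ n * ∏ m ∈ Finset.range n, ((-b / a) - ζ ^ m) := by
          rw [Finset.prod_mul_distrib, Finset.prod_const, Finset.card_range]
      _ = (-a) ^ n * ((-b / a) ^ n - 1) := by
          rw [prod_sub_pow_primroot n hpos hprim]
      _ = a ^ n + b ^ n := by
          have hodd : Odd n := ⟨k, hk⟩
          rw [mul_sub, ← mul_pow, hodd.neg_pow a]
          field_simp
          ring
  have hprod2 : ∏ m ∈ Finset.range n, (w⁻¹) ^ m = (-1 : ℂ) ^ k := by
    rw [Finset.prod_pow_eq_pow_sum, Finset.sum_range_id]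
    have h1 : n - 1 = 2 * k := by omega
    have hmul : n * (n - 1) = (n * k) * 2 := by rw [h1, hk]; ring
    rw [show n * (n - 1) / 2 = n * k by omega, pow_mul, inv_pow, hwn, inv_neg, inv_one]
  have hab : a ^ n + b ^ n = 2 * Complex.cos (n * z) := by
    rw [ha, hb, ← Complex.exp_nat_mul, ← Complex.exp_nat_mul, Complex.two_cos]
    congr 2 <;> ring
  have hP : ∏ m ∈ Finset.range n, Complex.cos (z + m * Real.pi / n)
      = (-1 : ℂ) ^ k * (2 * Complex.cos (n * z)) / 2 ^ n := by
    calc ∏ m ∈ Finset.range n, Complex.cos (z + m * Real.pi / n)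
        = ∏ m ∈ Finset.range n, ((w⁻¹) ^ m * (a * ζ ^ m + b) / 2) := by
          refine Finset.prod_congr rfl fun m _ => ?_
          rw [hcos m, key m]
      _ = (∏ m ∈ Finset.range n, ((w⁻¹) ^ m * (a * ζ ^ m + b))) / 2 ^ n := by
          rw [Finset.prod_div_distrib, Finset.prod_const, Finset.card_range]
      _ = ((-1 : ℂ) ^ k * (a ^ n + b ^ n)) / 2 ^ n := by
          rw [Finset.prod_mul_distrib, hprod1, hprod2]
      _ = (-1 : ℂ) ^ k * (2 * Complex.cos (n * z)) / 2 ^ n := by rw [hab]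
  rw [hP, hk2]
  have h2 : (2 : ℂ) ^ n = 2 ^ (n - 1) * 2 := by
    rw [← pow_succ]; congr 1; omega
  have hm1 : ((-1 : ℂ) ^ k) * ((-1 : ℂ) ^ k) = 1 := by
    rw [← pow_add, Even.neg_one_pow ⟨k, rfl⟩]
  have hm2 : ((-1 : ℂ)) ^ (k * 2) = 1 := by rw [pow_mul, sq, hm1]
  field_simp [h2]
  ring_nf
  simp only [hm2]
  ring
  rw [h2, mul_assoc]
end

section
/- Let τ have Im τ > 0 and q = e^{iπτ}. Then θ₂(v,τ)/(cos(πv) θ₂(0,τ)) = ∏_{k≥1} [1 - (sin πv/cos kπτ)²], where θ₂(v,τ) = 2 q^{1/4} cos(πv) ∏_{k≥1}(1-q^{2k})(1 + 2q^{2k}cos 2πv + q^{4k}) and θ₂(0,τ) = 2 q^{1/4} ∏_{k≥1}(1-q^{2k})(1+q^{2k})². -/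
open Complex

/-- The nome `q = e^{iπτ}`. -/
noncomputable def nome (τ : ℂ) : ℂ := Complex.exp (Real.pi * Complex.I * τ)

/-- Jacobi theta function `θ₂(v,τ)` via its infinite product expansion. -/
noncomputable def theta2 (v τ : ℂ) : ℂ :=
  2 * Complex.exp (Real.pi * Complex.I * τ / 4) * Complex.cos (Real.pi * v) *
    ∏' k : ℕ, ((1 - nome τ ^ (2 * (k + 1))) *
      (1 + 2 * nome τ ^ (2 * (k + 1)) * Complex.cos (2 * Real.pi * v) + nome τ ^ (4 * (k + 1))))

/-- The null value `θ₂(0,τ)`. -/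
noncomputable def theta2Zero (τ : ℂ) : ℂ :=
  2 * Complex.exp (Real.pi * Complex.I * τ / 4) *
    ∏' k : ℕ, ((1 - nome τ ^ (2 * (k + 1))) * (1 + nome τ ^ (2 * (k + 1))) ^ 2)

lemma aux_hasProd_zero {f : ℕ → ℂ} (j : ℕ) (hj : f j = 0) : HasProd f 0 := by
  rw [HasProd]
  have h : ∀ᶠ s : Finset ℕ in Filter.atTop, ∏ i ∈ s, f i = 0 := by
    filter_upwards [Filter.eventually_ge_atTop {j}] with s hs
    exact Finset.prod_eq_zero (Finset.singleton_subset_iff.mp hs) hj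
  exact Filter.Tendsto.congr' (h.mono fun s hs => hs.symm) tendsto_const_nhds

lemma aux_summable_log {a : ℕ → ℂ} (h : Summable fun k => ‖a k‖) :
    Summable fun k => Complex.log (1 + a k) := by
  have h0 : Filter.Tendsto (fun k => ‖a k‖) Filter.atTop (nhds 0) := h.tendsto_atTop_zero
  have hev : ∀ᶠ k in Filter.atTop, ‖a k‖ ≤ 1 / 2 :=
    h0.eventually (eventually_le_nhds (by norm_num))
  apply Summable.of_norm_bounded_eventually_nat (g := fun k => 3 / 2 * ‖a k‖) (h.mul_left _)
  filter_upwards [hev] with k hk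
  exact Complex.norm_log_one_add_half_le_self hk

lemma aux_mult_ne_zero {f : ℕ → ℂ} (h0 : ∀ k, f k ≠ 0)
    (h : Summable fun k => Complex.log (f k)) :
    Multipliable f ∧ (∏' k, f k) ≠ 0 := by
  have hp : HasProd f (Complex.exp (∑' k, Complex.log (f k))) :=
    h.hasSum.cexp.congr_fun fun n => by
      simp only [Function.comp_apply, Complex.exp_log (h0 n)]
  exact ⟨hp.multipliable, by rw [hp.tprod_eq]; exact Complex.exp_ne_zero _⟩

theorem theta2_div_eq_tprod (τ v : ℂ) (hτ : 0 < τ.im)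
    (hv : Complex.cos (Real.pi * v) ≠ 0)
    (hk : ∀ k : ℕ, Complex.cos (((k : ℂ) + 1) * Real.pi * τ) ≠ 0) :
    theta2 v τ / (Complex.cos (Real.pi * v) * theta2Zero τ) =
      ∏' k : ℕ, (1 - (Complex.sin (Real.pi * v) / Complex.cos (((k : ℂ) + 1) * Real.pi * τ)) ^ 2) := by
  set q : ℂ := nome τ with hqdef
  have hq0 : q ≠ 0 := Complex.exp_ne_zero _
  have hqn : ‖q‖ < 1 := by
    rw [hqdef, nome, Complex.norm_exp]
    rw [Real.exp_lt_one_iff]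
    have : (↑Real.pi * I * τ).re = -(Real.pi * τ.im) := by
      simp [Complex.mul_re, Complex.mul_im]
    rw [this]
    have := Real.pi_pos
    nlinarith
  have hqnn : (0:ℝ) ≤ ‖q‖ := norm_nonneg _
  -- cosine formula
  have hpow2 : ∀ k : ℕ, q ^ (2 * (k + 1)) = (q ^ (k + 1)) ^ 2 := fun k => by
    rw [← pow_mul, mul_comm]
  have hcos : ∀ k : ℕ, Complex.cos (((k : ℂ) + 1) * Real.pi * τ)
      = (1 + q ^ (2 * (k + 1))) / (2 * q ^ (k + 1)) := by
    intro k
    have he : Complex.exp (((k : ℂ) + 1) * Real.pi * τ * I) = q ^ (k + 1) := by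
      rw [hqdef, nome, ← Complex.exp_nat_mul]
      congr 1
      push_cast
      ring
    have he' : Complex.exp (-(((k : ℂ) + 1) * Real.pi * τ) * I) = (q ^ (k + 1))⁻¹ := by
      rw [← he, ← Complex.exp_neg]
      congr 1
      ring
    rw [Complex.cos, he, he', hpow2]
    have hqk : q ^ (k + 1) ≠ 0 := pow_ne_zero _ hq0
    field_simp
    ring
  have h1Q : ∀ k : ℕ, (1 : ℂ) + q ^ (2 * (k + 1)) ≠ 0 := by
    intro k h
    apply hk k
    rw [hcos k, h, zero_div]
  set s : ℂ := Complex.sin (Real.pi * v) with hsdef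
  -- rewrite the RHS factors
  have hR : ∀ k : ℕ,
      (1 - (Complex.sin (Real.pi * v) / Complex.cos (((k : ℂ) + 1) * Real.pi * τ)) ^ 2)
      = 1 - 4 * s ^ 2 * q ^ (2 * (k + 1)) / (1 + q ^ (2 * (k + 1))) ^ 2 := by
    intro k
    rw [hcos k, ← hsdef]
    have hqk : q ^ (k + 1) ≠ 0 := pow_ne_zero _ hq0
    rw [hpow2 k]
    field_simp
    ring
  -- geometric summability
  have hgeo : Summable fun k : ℕ => ‖q‖ ^ (2 * (k + 1)) := by
    have h1 : Summable fun k : ℕ => (‖q‖ ^ 2) ^ k :=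
      summable_geometric_of_lt_one (by positivity) (by nlinarith)
    refine (h1.mul_left (‖q‖ ^ 2)).congr fun k => ?_
    rw [← pow_succ', ← pow_mul]
  have hQle : ∀ k : ℕ, ‖q ^ (2 * (k + 1))‖ ≤ ‖q‖ ^ 2 := by
    intro k
    rw [norm_pow]
    exact pow_le_pow_of_le_one hqnn hqn.le (by omega)
  have hQlt1 : ∀ k : ℕ, ‖q ^ (2 * (k + 1))‖ < 1 := by
    intro k
    rw [norm_pow]
    exact pow_lt_one₀ hqnn hqn (by omega)
  set δ : ℝ := 1 - ‖q‖ ^ 2 with hδdef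
  have hδ : 0 < δ := by nlinarith
  have hQδ : ∀ k : ℕ, δ ≤ ‖(1 : ℂ) + q ^ (2 * (k + 1))‖ := by
    intro k
    have h2 := norm_sub_norm_le (1 : ℂ) (-(q ^ (2 * (k + 1))))
    simp only [norm_one, norm_neg, sub_neg_eq_add] at h2
    have := hQle k
    rw [hδdef]
    linarith
  -- the G factors: multipliable and nonzero product
  have hGform : ∀ k : ℕ, (1 - q ^ (2 * (k + 1))) * (1 + q ^ (2 * (k + 1))) ^ 2
      = 1 + (q ^ (2 * (k + 1)) - (q ^ (2 * (k + 1))) ^ 2 - (q ^ (2 * (k + 1))) ^ 3) := by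
    intro k
    ring
  have hGsum : Summable fun k : ℕ =>
      ‖q ^ (2 * (k + 1)) - (q ^ (2 * (k + 1))) ^ 2 - (q ^ (2 * (k + 1))) ^ 3‖ := by
    apply Summable.of_nonneg_of_le (fun k => norm_nonneg _) ?_ (hgeo.mul_left 3)
    intro k
    have h1 : ‖q ^ (2 * (k + 1))‖ = ‖q‖ ^ (2 * (k + 1)) := norm_pow _ _
    have h2 := hQlt1 k
    have h3 : (0:ℝ) ≤ ‖q ^ (2 * (k + 1))‖ := norm_nonneg _
    have e2 : ‖(q ^ (2 * (k + 1))) ^ 2‖ = ‖q ^ (2 * (k + 1))‖ ^ 2 := norm_pow _ _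
    have e3 : ‖(q ^ (2 * (k + 1))) ^ 3‖ = ‖q ^ (2 * (k + 1))‖ ^ 3 := norm_pow _ _
    calc ‖q ^ (2 * (k + 1)) - (q ^ (2 * (k + 1))) ^ 2 - (q ^ (2 * (k + 1))) ^ 3‖
        ≤ ‖q ^ (2 * (k + 1)) - (q ^ (2 * (k + 1))) ^ 2‖ + ‖(q ^ (2 * (k + 1))) ^ 3‖ :=
          norm_sub_le _ _
      _ ≤ ‖q ^ (2 * (k + 1))‖ + ‖(q ^ (2 * (k + 1))) ^ 2‖ + ‖(q ^ (2 * (k + 1))) ^ 3‖ := by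
          have := norm_sub_le (q ^ (2 * (k + 1))) ((q ^ (2 * (k + 1))) ^ 2)
          linarith
      _ = ‖q ^ (2 * (k + 1))‖ + ‖q ^ (2 * (k + 1))‖ ^ 2 + ‖q ^ (2 * (k + 1))‖ ^ 3 := by
          rw [e2, e3]
      _ ≤ 3 * ‖q‖ ^ (2 * (k + 1)) := by rw [← h1]; nlinarith
  have hGne : ∀ k : ℕ, (1 - q ^ (2 * (k + 1))) * (1 + q ^ (2 * (k + 1))) ^ 2 ≠ 0 := by
    intro k
    apply mul_ne_zero
    · intro h
      have hq1 : q ^ (2 * (k + 1)) = 1 := by linear_combination -h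
      have h2 := hQlt1 k
      rw [hq1, norm_one] at h2
      exact lt_irrefl _ h2
    · exact pow_ne_zero _ (h1Q k)
  have hGlog : Summable fun k : ℕ =>
      Complex.log ((1 - q ^ (2 * (k + 1))) * (1 + q ^ (2 * (k + 1))) ^ 2) :=
    (aux_summable_log hGsum).congr fun k => by rw [← hGform k]
  have hG := aux_mult_ne_zero hGne hGlog
  -- the R factors: summable norms
  have hRsum : Summable fun k : ℕ =>
      ‖-(4 * s ^ 2 * q ^ (2 * (k + 1)) / (1 + q ^ (2 * (k + 1))) ^ 2)‖ := by
    apply Summable.of_nonneg_of_le (fun k => norm_nonneg _) ?_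
      (hgeo.mul_left (4 * ‖s‖ ^ 2 / δ ^ 2))
    intro k
    rw [norm_neg, norm_div, norm_mul, norm_mul, norm_pow, norm_pow, norm_pow]
    have h4 : ‖(4 : ℂ)‖ = 4 := by norm_num
    rw [h4, show 4 * ‖s‖ ^ 2 / δ ^ 2 * ‖q‖ ^ (2 * (k + 1))
        = 4 * ‖s‖ ^ 2 * ‖q‖ ^ (2 * (k + 1)) / δ ^ 2 by ring]
    have hsq : δ ^ 2 ≤ ‖(1 : ℂ) + q ^ (2 * (k + 1))‖ ^ 2 := by
      have := hQδ k
      nlinarith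
    gcongr
  -- the key termwise identity
  have hc2 : Complex.cos (2 * (Real.pi : ℂ) * v) = 1 - 2 * s ^ 2 := by
    rw [show (2 : ℂ) * Real.pi * v = 2 * (Real.pi * v) by ring, Complex.cos_two_mul, hsdef]
    linear_combination 2 * (Complex.sin_sq_add_cos_sq ((Real.pi : ℂ) * v))
  have hFRG : ∀ k : ℕ,
      (1 - q ^ (2 * (k + 1))) *
        (1 + 2 * q ^ (2 * (k + 1)) * Complex.cos (2 * Real.pi * v) + q ^ (4 * (k + 1)))
      = (1 - 4 * s ^ 2 * q ^ (2 * (k + 1)) / (1 + q ^ (2 * (k + 1))) ^ 2) *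
        ((1 - q ^ (2 * (k + 1))) * (1 + q ^ (2 * (k + 1))) ^ 2) := by
    intro k
    rw [hc2]
    have h4 : q ^ (4 * (k + 1)) = (q ^ (2 * (k + 1))) ^ 2 := by
      rw [← pow_mul]
      ring_nf
    rw [h4]
    have h1 := h1Q k
    field_simp
    ring
  have hE : Complex.exp ((Real.pi : ℂ) * I * τ / 4) ≠ 0 := Complex.exp_ne_zero _
  by_cases hz : ∃ j : ℕ,
      (1 : ℂ) - 4 * s ^ 2 * q ^ (2 * (j + 1)) / (1 + q ^ (2 * (j + 1))) ^ 2 = 0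
  · obtain ⟨j, hj⟩ := hz
    have hFj : (1 - q ^ (2 * (j + 1))) *
        (1 + 2 * q ^ (2 * (j + 1)) * Complex.cos (2 * Real.pi * v) + q ^ (4 * (j + 1))) = 0 := by
      rw [hFRG j, hj, zero_mul]
    have hFzero : (∏' k : ℕ, ((1 - q ^ (2 * (k + 1))) *
        (1 + 2 * q ^ (2 * (k + 1)) * Complex.cos (2 * Real.pi * v) + q ^ (4 * (k + 1))))) = 0 :=
      (aux_hasProd_zero j hFj).tprod_eq
    have hRzero : (∏' k : ℕ,
        (1 - (Complex.sin (Real.pi * v) / Complex.cos (((k : ℂ) + 1) * Real.pi * τ)) ^ 2)) = 0 :=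
      (aux_hasProd_zero j (by rw [hR j]; exact hj)).tprod_eq
    rw [hRzero]
    unfold theta2
    rw [← hqdef, hFzero, mul_zero, zero_div]
  · push_neg at hz
    have hRlog : Summable fun k : ℕ =>
        Complex.log (1 - 4 * s ^ 2 * q ^ (2 * (k + 1)) / (1 + q ^ (2 * (k + 1))) ^ 2) :=
      (aux_summable_log hRsum).congr fun k => by rw [show (1 : ℂ) +
        -(4 * s ^ 2 * q ^ (2 * (k + 1)) / (1 + q ^ (2 * (k + 1))) ^ 2)
        = 1 - 4 * s ^ 2 * q ^ (2 * (k + 1)) / (1 + q ^ (2 * (k + 1))) ^ 2 by ring]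
    have hRm := aux_mult_ne_zero hz hRlog
    have key : (∏' k : ℕ, ((1 - q ^ (2 * (k + 1))) *
        (1 + 2 * q ^ (2 * (k + 1)) * Complex.cos (2 * Real.pi * v) + q ^ (4 * (k + 1)))))
        = (∏' k : ℕ, (1 - 4 * s ^ 2 * q ^ (2 * (k + 1)) / (1 + q ^ (2 * (k + 1))) ^ 2)) *
          (∏' k : ℕ, ((1 - q ^ (2 * (k + 1))) * (1 + q ^ (2 * (k + 1))) ^ 2)) := by
      rw [← Multipliable.tprod_mul hRm.1 hG.1]
      exact tprod_congr hFRG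
    rw [tprod_congr hR]
    unfold theta2 theta2Zero
    rw [← hqdef, key]
    have hGne0 := hG.2
    field_simp
end
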